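/- Let σ_1 ≥ ... ≥ σ_{k−1} > σ_k > 0 be the singular values of H = θᵀKθ (K symmetric positive definite) with σ_k uniquely minimal, and let R' = (1/(2k))·Σ σ_i² − (1/2)·σ_k² > 0. Update θ' = θ − η·K^{−1}·∇_θ R_ill(H(θ)) where ∇_θ R_ill(H) = 2Kθ(σ_k v_k v_kᵀ − (1/k)H)/R'². Then θ'ᵀKθ' has singular values σ'_i = σ_i + (4η/(k R'²))σ_i² + (4η²/(k² R'⁴))σ_i³ for i < k, and σ'_k = σ_k − (4η/R'²)(1−1/k)σ_k² + (4η²/R'⁴)(1−1/k)²σ_k³. -/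

import Mathlib

open Matrix

/-!
The preconditioned step is `θ' = θ (1 - c W)` with `c = 2η / R'²` and `W = V diagonal w Vᵀ`,
`w = σ_k e_k - σ / k`: the factor `K⁻¹` cancels the `K` in the gradient, and `v_k v_kᵀ` and `H`
are both diagonal in the frame `V`. Because `Vᵀ V = 1`, matrices of the form `V diagonal a Vᵀ`
multiply like their diagonals, so `θ'ᵀ K θ' = (1 - c W) H (1 - c W) = V diagonal (σ (1 - c w)²) Vᵀ`,
and expanding `σ_i (1 - c w_i)²` gives the stated cubic polynomials.
-/

section

variable {m n R : Type*} [Fintype n] [DecidableEq n] [CommRing R]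

theorem vecMulVec_col_eq_mul_diagonal_single (V : Matrix m n R) (e : n) :
    vecMulVec (fun i => V i e) (fun j => V j e) = V * diagonal (Pi.single e (1 : R)) * Vᵀ := by
  ext i j
  simp [vecMulVec_apply, mul_apply, diagonal_apply, Pi.single_apply]

theorem transpose_conj_diagonal (V : Matrix m n R) (a : n → R) :
    (V * diagonal a * Vᵀ)ᵀ = V * diagonal a * Vᵀ := by
  rw [transpose_mul, transpose_mul, diagonal_transpose, transpose_transpose, Matrix.mul_assoc]

theorem smul_conj_diagonal (V : Matrix m n R) (c : R) (a : n → R) :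
    c • (V * diagonal a * Vᵀ) = V * diagonal (c • a) * Vᵀ := by
  rw [diagonal_smul, Matrix.mul_smul, Matrix.smul_mul]

theorem conj_diagonal_sub_conj_diagonal (V : Matrix m n R) (a b : n → R) :
    V * diagonal a * Vᵀ - V * diagonal b * Vᵀ = V * diagonal (a - b) * Vᵀ := by
  rw [← Matrix.sub_mul, ← Matrix.mul_sub, diagonal_sub]; rfl

variable [Fintype m] {V : Matrix m n R}

theorem conj_diagonal_mul_conj_diagonal (hV : Vᵀ * V = 1) (a b : n → R) :
    V * diagonal a * Vᵀ * (V * diagonal b * Vᵀ) = V * diagonal (a * b) * Vᵀ := by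
  calc V * diagonal a * Vᵀ * (V * diagonal b * Vᵀ)
      = V * diagonal a * (Vᵀ * V) * diagonal b * Vᵀ := by simp only [Matrix.mul_assoc]
    _ = V * diagonal (a * b) * Vᵀ := by
      rw [hV, Matrix.mul_one, Matrix.mul_assoc V, diagonal_mul_diagonal]; rfl

section

variable [DecidableEq m]

theorem one_sub_smul_conj_diagonal_mul (hV : Vᵀ * V = 1) (c : R) (a b : n → R) :
    (1 - c • (V * diagonal a * Vᵀ)) * (V * diagonal b * Vᵀ) =
      V * diagonal (fun i => (1 - c * a i) * b i) * Vᵀ := by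
  rw [Matrix.sub_mul, Matrix.one_mul, Matrix.smul_mul, conj_diagonal_mul_conj_diagonal hV,
    smul_conj_diagonal, conj_diagonal_sub_conj_diagonal]
  congr 3; funext i
  simp only [Pi.sub_apply, Pi.smul_apply, Pi.mul_apply, smul_eq_mul]; ring

theorem conj_diagonal_mul_one_sub_smul (hV : Vᵀ * V = 1) (c : R) (a b : n → R) :
    V * diagonal b * Vᵀ * (1 - c • (V * diagonal a * Vᵀ)) =
      V * diagonal (fun i => b i * (1 - c * a i)) * Vᵀ := by
  rw [Matrix.mul_sub, Matrix.mul_one, Matrix.mul_smul, conj_diagonal_mul_conj_diagonal hV,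
    smul_conj_diagonal, conj_diagonal_sub_conj_diagonal]
  congr 3; funext i
  simp only [Pi.sub_apply, Pi.smul_apply, Pi.mul_apply, smul_eq_mul]; ring

theorem gram_sub_smul_mul_conj_diagonal (hV : Vᵀ * V = 1) {K θ : Matrix m m R}
    {σ : n → R} (hH : θᵀ * K * θ = V * diagonal σ * Vᵀ) (c : R) (w : n → R) :
    (θ - c • (θ * (V * diagonal w * Vᵀ)))ᵀ * K * (θ - c • (θ * (V * diagonal w * Vᵀ))) =
      V * diagonal (fun i => σ i * (1 - c * w i) ^ 2) * Vᵀ := by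
  set P : Matrix m m R := 1 - c • (V * diagonal w * Vᵀ)
  have hθP : θ - c • (θ * (V * diagonal w * Vᵀ)) = θ * P := by
    rw [Matrix.mul_sub, Matrix.mul_one, Matrix.mul_smul]
  have hP : Pᵀ = P := by
    rw [transpose_sub, transpose_one, transpose_smul, transpose_conj_diagonal]
  rw [hθP]
  calc (θ * P)ᵀ * K * (θ * P) = P * (θᵀ * K * θ * P) := by
        rw [transpose_mul, hP]; simp only [Matrix.mul_assoc]
    _ = V * diagonal (fun i => σ i * (1 - c * w i) ^ 2) * Vᵀ := by
        rw [hH, conj_diagonal_mul_one_sub_smul hV, one_sub_smul_conj_diagonal_mul hV]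
        congr 3; funext i; ring

end

end

/-- Let `σ_1 ≥ ⋯ ≥ σ_{k−1} > σ_k > 0` be the singular values of `H = θᵀKθ`
(`K` symmetric positive definite) with `σ_k` uniquely minimal, and
`R' = (1/(2k))Σσ_i² − (1/2)σ_k² > 0`. For `θ' = θ − η·K⁻¹·∇_θ R_ill(H(θ))`,
where `∇_θ R_ill(H) = 2Kθ(σ_k v_k v_kᵀ − (1/k)H)/R'²`, the matrix `θ'ᵀKθ'` has singular
values `σ'_i = σ_i + (4η/(kR'²))σ_i² + (4η²/(k²R'⁴))σ_i³` for `i < k` and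
`σ'_k = σ_k − (4η/R'²)(1−1/k)σ_k² + (4η²/R'⁴)(1−1/k)²σ_k³`. -/
theorem stmt_16 (d k : ℕ) (hk : 2 ≤ k)
    (K θ : Matrix (Fin d) (Fin d) ℝ)
    (hK : K.PosDef)
    (V : Matrix (Fin d) (Fin k) ℝ) (σ : Fin k → ℝ)
    (hV : Vᵀ * V = 1)
    (hSVD : θᵀ * K * θ = V * Matrix.diagonal σ * Vᵀ)
    (R' : ℝ)
    (hR'pos : 0 < R')
    (G : Matrix (Fin d) (Fin d) ℝ)
    (hG : G = (R' ^ 2)⁻¹ • ((2 : ℝ) • (K * θ *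
      (σ ⟨k - 1, by omega⟩ • Matrix.vecMulVec (fun i => V i ⟨k - 1, by omega⟩)
          (fun j => V j ⟨k - 1, by omega⟩)
        - ((k : ℝ))⁻¹ • (θᵀ * K * θ)))))
    (η : ℝ) :
    (θ - η • (K⁻¹ * G))ᵀ * K * (θ - η • (K⁻¹ * G)) =
      V * Matrix.diagonal (fun i =>
        if i = (⟨k - 1, by omega⟩ : Fin k) then
          σ i - (4 * η / R' ^ 2) * (1 - 1 / (k : ℝ)) * (σ i) ^ 2
            + (4 * η ^ 2 / R' ^ 4) * (1 - 1 / (k : ℝ)) ^ 2 * (σ i) ^ 3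
        else
          σ i + (4 * η / ((k : ℝ) * R' ^ 2)) * (σ i) ^ 2
            + (4 * η ^ 2 / ((k : ℝ) ^ 2 * R' ^ 4)) * (σ i) ^ 3) * Vᵀ := by
  set e : Fin k := ⟨k - 1, by omega⟩
  set w : Fin k → ℝ := σ e • Pi.single e 1 - (k : ℝ)⁻¹ • σ
  have hW : σ e • vecMulVec (fun i => V i e) (fun j => V j e) - (k : ℝ)⁻¹ • (θᵀ * K * θ) =
      V * diagonal w * Vᵀ := by
    rw [vecMulVec_col_eq_mul_diagonal_single, hSVD, smul_conj_diagonal, smul_conj_diagonal,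
      conj_diagonal_sub_conj_diagonal]
  have hKK : K⁻¹ * K = 1 := nonsing_inv_mul K (isUnit_iff_ne_zero.mpr hK.det_pos.ne')
  have hstep : η • (K⁻¹ * G) = (2 * η / R' ^ 2) • (θ * (V * diagonal w * Vᵀ)) := by
    rw [hG, hW, Matrix.mul_smul, Matrix.mul_smul, smul_smul, smul_smul, Matrix.mul_assoc K θ,
      ← Matrix.mul_assoc K⁻¹, hKK, Matrix.one_mul]
    congr 1; ring
  rw [hstep, gram_sub_smul_mul_conj_diagonal hV hSVD]
  congr 3; funext i
  have hR : R' ≠ 0 := hR'pos.ne'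
  by_cases hi : i = e
  · subst hi
    simp only [w, Pi.sub_apply, Pi.smul_apply, Pi.single_eq_same, smul_eq_mul, mul_one, if_pos]
    field_simp; ring
  · simp only [w, Pi.sub_apply, Pi.smul_apply, Pi.single_eq_of_ne hi, smul_eq_mul, mul_zero,
      if_neg hi]
    field_simp; ring
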